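/- Let Γ = (V,E) be a graph, and for each v ∈ V let G_v, H_v be groups with symmetric generating sets S_v ⊆ G_v \ {e} and T_v ⊆ H_v \ {e}. Suppose for each v there is a graph isomorphism Cay(G_v,S_v) ≅ Cay(H_v,T_v). Let G_Γ, H_Γ be the graph products and S = ⋃_v S_v, T = ⋃_v T_v. Then Cay(G_Γ, S) ≅ Cay(H_Γ, T) as graphs. -/

import Mathlib

/-- The Cayley graph of a group `G` with respect to a set `S`:
vertices are elements of `G`, and `g` is adjacent to `g * s` for `s ∈ S`. -/
def cayley (G : Type*) [Group G] (S : Set G) : SimpleGraph G :=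
  SimpleGraph.fromRel (fun g h => g⁻¹ * h ∈ S)

/-- The normal closure of the commutators coming from edges of `Γ`. -/
def graphProductRels {V : Type*} (Γ : SimpleGraph V) (G : V → Type*) [∀ v, Group (G v)] :
    Subgroup (Monoid.CoprodI G) :=
  Subgroup.normalClosure {x | ∃ (u v : V) (a : G u) (b : G v), Γ.Adj u v ∧
    x = Monoid.CoprodI.of a * Monoid.CoprodI.of b *
        (Monoid.CoprodI.of a)⁻¹ * (Monoid.CoprodI.of b)⁻¹}

instance {V : Type*} (Γ : SimpleGraph V) (G : V → Type*) [∀ v, Group (G v)] :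
    (graphProductRels Γ G).Normal :=
  Subgroup.normalClosure_normal

/-- The graph product of the groups `G v` over the simplicial graph `Γ`. -/
def GraphProduct {V : Type*} (Γ : SimpleGraph V) (G : V → Type*) [∀ v, Group (G v)] : Type _ :=
  Monoid.CoprodI G ⧸ graphProductRels Γ G

instance {V : Type*} (Γ : SimpleGraph V) (G : V → Type*) [∀ v, Group (G v)] :
    Group (GraphProduct Γ G) :=
  QuotientGroup.Quotient.group _

/-- The canonical map from a vertex group into the graph product. -/
def GraphProduct.of {V : Type*} (Γ : SimpleGraph V) (G : V → Type*) [∀ v, Group (G v)]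
    {v : V} : G v →* GraphProduct Γ G :=
  (QuotientGroup.mk' (graphProductRels Γ G)).comp Monoid.CoprodI.of


namespace GPAux
set_option linter.unusedSectionVars false
set_option maxHeartbeats 1000000

attribute [local instance] Classical.propDecidable

variable {V : Type*} (Γ : SimpleGraph V) {K : V → Type*} [∀ v, Group (K v)]

/-- Letters -/
abbrev L (K : V → Type*) := (v : V) × K v

/-- one swap of adjacent commuting letters -/
def Step (w w' : List (L K)) : Prop :=
  ∃ (p q : List (L K)) (a b : L K), Γ.Adj a.1 b.1 ∧ w = p ++ a :: b :: q ∧ w' = p ++ b :: a :: q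

/-- shuffle equivalence -/
def SE : List (L K) → List (L K) → Prop := Relation.ReflTransGen (Step Γ)

/-- `w` has no letter with vertex `v` that can be shuffled to the front. -/
def noHead (v : V) : List (L K) → Prop
  | [] => True
  | c :: w => c.1 ≠ v ∧ (Γ.Adj c.1 v → noHead v w)

/-- reduced words -/
def Red : List (L K) → Prop
  | [] => True
  | c :: w => c.2 ≠ 1 ∧ noHead Γ c.1 w ∧ Red w

/-- all letters of `w` adjacent to `v` -/
def reach (v : V) (w : List (L K)) : Prop := ∀ c ∈ w, Γ.Adj c.1 v

/-- the scanning function: merge/erase at a head letter of vertex `v` (new value `μ a`),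
or insert `⟨v, x⟩` at the first barrier. -/
noncomputable def go (v : V) (μ : K v → K v) (x : K v) : List (L K) → List (L K)
  | [] => [⟨v, x⟩]
  | ⟨u, a⟩ :: w =>
      if h : u = v then (if μ (h ▸ a) = 1 then w else ⟨v, μ (h ▸ a)⟩ :: w)
      else if Γ.Adj u v then ⟨u, a⟩ :: go v μ x w
      else ⟨v, x⟩ :: ⟨u, a⟩ :: w

variable {Γ}

theorem Step.symm {w w' : List (L K)} (h : Step Γ w w') : Step Γ w' w := by
  obtain ⟨p, q, a, b, hab, h1, h2⟩ := h
  exact ⟨p, q, b, a, hab.symm, h2, h1⟩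

theorem SE.refl (w : List (L K)) : SE Γ w w := Relation.ReflTransGen.refl

theorem SE.trans {w₁ w₂ w₃ : List (L K)} (h : SE Γ w₁ w₂) (h' : SE Γ w₂ w₃) : SE Γ w₁ w₃ :=
  Relation.ReflTransGen.trans h h'

theorem SE.symm {w w' : List (L K)} (h : SE Γ w w') : SE Γ w' w := by
  induction h with
  | refl => exact SE.refl _
  | tail h₁ h₂ ih => exact SE.trans (Relation.ReflTransGen.single h₂.symm) ih

theorem Step.se {w w' : List (L K)} (h : Step Γ w w') : SE Γ w w' :=
  Relation.ReflTransGen.single h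

theorem Step.cons {w w' : List (L K)} (c : L K) (h : Step Γ w w') :
    Step Γ (c :: w) (c :: w') := by
  obtain ⟨p, q, a, b, hab, h1, h2⟩ := h
  exact ⟨c :: p, q, a, b, hab, by simp [h1], by simp [h2]⟩

theorem SE.cons {w w' : List (L K)} (c : L K) (h : SE Γ w w') : SE Γ (c :: w) (c :: w') := by
  induction h with
  | refl => exact SE.refl _
  | tail h₁ h₂ ih => exact ih.trans (h₂.cons c).se

theorem SE.length {w w' : List (L K)} (h : SE Γ w w') : w.length = w'.length := by
  induction h with
  | refl => rfl
  | tail h₁ h₂ ih =>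
      obtain ⟨p, q, a, b, _, h1, h2⟩ := h₂
      simp [h1, h2] at *; omega

@[simp] theorem noHead_nil (v : V) : noHead Γ v ([] : List (L K)) := trivial

@[simp] theorem noHead_cons {v : V} {c : L K} {w : List (L K)} :
    noHead Γ v (c :: w) ↔ c.1 ≠ v ∧ (Γ.Adj c.1 v → noHead Γ v w) := Iff.rfl

@[simp] theorem Red_nil : Red Γ ([] : List (L K)) := trivial

@[simp] theorem Red_cons {c : L K} {w : List (L K)} :
    Red Γ (c :: w) ↔ c.2 ≠ 1 ∧ noHead Γ c.1 w ∧ Red Γ w := Iff.rfl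

theorem noHead_append {v : V} {w₁ w₂ : List (L K)} :
    noHead Γ v (w₁ ++ w₂) ↔ noHead Γ v w₁ ∧ (reach Γ v w₁ → noHead Γ v w₂) := by
  induction w₁ with
  | nil => simp [reach]
  | cons c w ih =>
      simp only [List.cons_append, noHead_cons, ih, reach, List.mem_cons]
      constructor
      · rintro ⟨h1, h2⟩
        refine ⟨⟨h1, fun ha => (h2 ha).1⟩, fun hr => (h2 (hr c (Or.inl rfl))).2
          (fun d hd => hr d (Or.inr hd))⟩
      · rintro ⟨⟨h1, h2⟩, h3⟩
        exact ⟨h1, fun ha => ⟨h2 ha, fun hr => h3 (by rintro d (rfl | hd); exacts [ha, hr d hd])⟩⟩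

@[simp] theorem go_nil (v : V) (μ : K v → K v) (x : K v) :
    go Γ v μ x ([] : List (L K)) = [⟨v, x⟩] := rfl

theorem go_cons_same (v : V) (μ : K v → K v) (x : K v) (a : K v) (w : List (L K)) :
    go Γ v μ x (⟨v, a⟩ :: w) = if μ a = 1 then w else ⟨v, μ a⟩ :: w := by
  simp [go]

theorem go_cons_adj (v : V) (μ : K v → K v) (x : K v) {c : L K} (h : c.1 ≠ v)
    (hadj : Γ.Adj c.1 v) (w : List (L K)) :
    go Γ v μ x (c :: w) = c :: go Γ v μ x w := by
  obtain ⟨u, a⟩ := c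
  simp only [go, dif_neg h, if_pos hadj]

theorem go_cons_barrier (v : V) (μ : K v → K v) (x : K v) {c : L K} (h : c.1 ≠ v)
    (hadj : ¬ Γ.Adj c.1 v) (w : List (L K)) :
    go Γ v μ x (c :: w) = ⟨v, x⟩ :: c :: w := by
  obtain ⟨u, a⟩ := c
  simp only [go, dif_neg h, if_neg hadj]

theorem of_comm {u u' : V} (h : Γ.Adj u u') (a : K u) (b : K u') :
    Commute (GraphProduct.of Γ K a) (GraphProduct.of Γ K b) := by
  rw [← commutatorElement_eq_one_iff_commute]
  have hmem : Monoid.CoprodI.of a * Monoid.CoprodI.of b *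
      (Monoid.CoprodI.of a)⁻¹ * (Monoid.CoprodI.of b)⁻¹ ∈ graphProductRels Γ K :=
    Subgroup.subset_normalClosure ⟨u, u', a, b, h, rfl⟩
  have := (QuotientGroup.eq_one_iff (N := graphProductRels Γ K) _).2 hmem
  rw [commutatorElement_def]
  exact this

variable (Γ) in
/-- product of a word in the graph product -/
def prodW (w : List (L K)) : GraphProduct Γ K :=
  (w.map fun c => GraphProduct.of Γ K c.2).prod

@[simp] theorem prodW_nil : prodW Γ ([] : List (L K)) = 1 := rfl

@[simp] theorem prodW_cons (c : L K) (w : List (L K)) :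
    prodW Γ (c :: w) = GraphProduct.of Γ K c.2 * prodW Γ w := by
  simp [prodW]

@[simp] theorem prodW_append (w₁ w₂ : List (L K)) :
    prodW Γ (w₁ ++ w₂) = prodW Γ w₁ * prodW Γ w₂ := by
  simp [prodW]

theorem Step.prodW_eq {w w' : List (L K)} (h : Step Γ w w') : prodW Γ w = prodW Γ w' := by
  obtain ⟨p, q, a, b, hab, h1, h2⟩ := h
  subst h1; subst h2
  simp only [prodW_append, prodW_cons, ← mul_assoc]
  rw [mul_assoc (prodW Γ p), (of_comm hab a.2 b.2).eq, ← mul_assoc]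

theorem SE.prodW_eq {w w' : List (L K)} (h : SE Γ w w') : prodW Γ w = prodW Γ w' := by
  induction h with
  | refl => rfl
  | tail h₁ h₂ ih => exact ih.trans h₂.prodW_eq

theorem go_cons_same' (v : V) (μ : K v → K v) (x : K v) {c : L K} (h : c.1 = v)
    (w : List (L K)) :
    go Γ v μ x (c :: w) = if μ (h ▸ c.2) = 1 then w else ⟨v, μ (h ▸ c.2)⟩ :: w := by
  obtain ⟨u, a⟩ := c
  dsimp at h
  subst h
  simp [go]

theorem go_cons_head (v : V) (μ : K v → K v) (x : K v) (a : K v) (w : List (L K)) :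
    go Γ v μ x (⟨v, a⟩ :: w) = if μ a = 1 then w else ⟨v, μ a⟩ :: w := by
  simpa using go_cons_same' v μ x (c := ⟨v, a⟩) rfl w

theorem noHead_go {v u : V} (hne : u ≠ v) (hadj : Γ.Adj v u) (μ : K v → K v) (x : K v)
    {w : List (L K)} (h : noHead Γ u w) : noHead Γ u (go Γ v μ x w) := by
  induction w with
  | nil => exact ⟨hne.symm, fun _ => trivial⟩
  | cons c w ih =>
      obtain ⟨hc1, hc2⟩ := h
      by_cases h1 : c.1 = v
      · rw [go_cons_same' _ _ _ h1]
        have hcu : Γ.Adj c.1 u := by rw [h1]; exact hadj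
        split
        · exact hc2 hcu
        · exact ⟨hne.symm, fun _ => hc2 hcu⟩
      · by_cases h2 : Γ.Adj c.1 v
        · rw [go_cons_adj _ _ _ h1 h2]
          exact ⟨hc1, fun hc => ih (hc2 hc)⟩
        · rw [go_cons_barrier _ _ _ h1 h2]
          exact ⟨hne.symm, fun _ => ⟨hc1, hc2⟩⟩

theorem Red_go (v : V) (μ : K v → K v) {x : K v} (hx : x ≠ 1) {w : List (L K)}
    (h : Red Γ w) : Red Γ (go Γ v μ x w) := by
  induction w with
  | nil => exact ⟨hx, trivial, trivial⟩
  | cons c w ih =>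
      obtain ⟨hc1, hc2, hc3⟩ := h
      by_cases h1 : c.1 = v
      · rw [go_cons_same' _ _ _ h1]
        split
        · exact hc3
        · exact ⟨by assumption, h1 ▸ hc2, hc3⟩
      · by_cases h2 : Γ.Adj c.1 v
        · rw [go_cons_adj _ _ _ h1 h2]
          exact ⟨hc1, noHead_go h1 h2.symm μ x hc2, ih hc3⟩
        · rw [go_cons_barrier _ _ _ h1 h2]
          exact ⟨hx, ⟨h1, fun hc => absurd hc h2⟩, hc1, hc2, hc3⟩

theorem go_of_noHead (v : V) (μ : K v → K v) (x : K v) {w : List (L K)}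
    (h : noHead Γ v w) : SE Γ (go Γ v μ x w) (⟨v, x⟩ :: w) := by
  induction w with
  | nil => exact SE.refl _
  | cons c w ih =>
      obtain ⟨hc1, hc2⟩ := h
      by_cases h2 : Γ.Adj c.1 v
      · rw [go_cons_adj _ _ _ hc1 h2]
        refine ((ih (hc2 h2)).cons c).trans ?_
        exact (Step.se ⟨[], w, c, ⟨v, x⟩, h2, rfl, rfl⟩)
      · rw [go_cons_barrier _ _ _ hc1 h2]
        exact SE.refl _

theorem go_swap (v : V) (μ : K v → K v) (x : K v) (p q : List (L K)) (a b : L K)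
    (hab : Γ.Adj a.1 b.1) :
    SE Γ (go Γ v μ x (p ++ a :: b :: q)) (go Γ v μ x (p ++ b :: a :: q)) := by
  induction p with
  | cons c p ih =>
      by_cases h1 : c.1 = v
      · rw [List.cons_append, List.cons_append, go_cons_same' _ _ _ h1,
          go_cons_same' _ _ _ h1]
        split
        · exact (Step.se ⟨p, q, a, b, hab, rfl, rfl⟩)
        · exact ((Step.se ⟨p, q, a, b, hab, rfl, rfl⟩).cons _)
      · by_cases h2 : Γ.Adj c.1 v
        · rw [List.cons_append, List.cons_append, go_cons_adj _ _ _ h1 h2,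
            go_cons_adj _ _ _ h1 h2]
          exact ih.cons c
        · rw [List.cons_append, List.cons_append, go_cons_barrier _ _ _ h1 h2,
            go_cons_barrier _ _ _ h1 h2]
          exact (((Step.se ⟨p, q, a, b, hab, rfl, rfl⟩).cons c).cons _)
  | nil =>
      simp only [List.nil_append]
      by_cases ha : a.1 = v
      · have hb1 : b.1 ≠ v := fun hh => (hh ▸ ha ▸ hab).ne rfl
        rw [go_cons_same' _ _ _ ha, go_cons_adj _ _ _ hb1 (ha ▸ hab.symm),
          go_cons_same' _ _ _ ha]
        split
        · exact SE.refl _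
        · exact (Step.se ⟨[], q, _, b, ha ▸ hab, rfl, rfl⟩)
      · by_cases hb : b.1 = v
        · rw [go_cons_adj _ _ _ ha (hb ▸ hab), go_cons_same' _ _ _ hb,
            go_cons_same' _ _ _ hb]
          split
          · exact SE.refl _
          · exact (Step.se ⟨[], q, a, _, hb ▸ hab, rfl, rfl⟩)
        · by_cases ha2 : Γ.Adj a.1 v <;> by_cases hb2 : Γ.Adj b.1 v
          · rw [go_cons_adj _ _ _ ha ha2, go_cons_adj _ _ _ hb hb2,
              go_cons_adj _ _ _ hb hb2, go_cons_adj _ _ _ ha ha2]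
            exact (Step.se ⟨[], go Γ v μ x q, a, b, hab, rfl, rfl⟩)
          · rw [go_cons_adj _ _ _ ha ha2, go_cons_barrier _ _ _ hb hb2,
              go_cons_barrier _ _ _ hb hb2]
            refine SE.trans (Step.se ⟨[], b :: q, a, ⟨v, x⟩, ha2, rfl, rfl⟩) ?_
            exact (Step.se ⟨[⟨v, x⟩], q, a, b, hab, rfl, rfl⟩)
          · rw [go_cons_barrier _ _ _ ha ha2, go_cons_adj _ _ _ hb hb2,
              go_cons_barrier _ _ _ ha ha2]
            refine SE.trans ?_ (Step.se ⟨[], a :: q, ⟨v, x⟩, b, hb2.symm, rfl, rfl⟩)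
            exact (Step.se ⟨[⟨v, x⟩], q, a, b, hab, rfl, rfl⟩)
          · rw [go_cons_barrier _ _ _ ha ha2, go_cons_barrier _ _ _ hb hb2]
            exact (Step.se ⟨[⟨v, x⟩], q, a, b, hab, rfl, rfl⟩)

theorem go_se (v : V) (μ : K v → K v) (x : K v) {w w' : List (L K)} (h : SE Γ w w') :
    SE Γ (go Γ v μ x w) (go Γ v μ x w') := by
  induction h with
  | refl => exact SE.refl _
  | tail h₁ h₂ ih =>
      obtain ⟨p, q, a, b, hab, rfl, rfl⟩ := h₂
      exact ih.trans (go_swap v μ x p q a b hab)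

variable (Γ) in
/-- left multiplication by `g ∈ K v` on words -/
noncomputable def actA (v : V) (g : K v) (w : List (L K)) : List (L K) :=
  if g = 1 then w else go Γ v (fun a => g * a) g w

@[simp] theorem actA_one (v : V) (w : List (L K)) : actA Γ v (1 : K v) w = w :=
  if_pos rfl

theorem actA_ne_one (v : V) {g : K v} (hg : g ≠ 1) (w : List (L K)) :
    actA Γ v g w = go Γ v (fun a => g * a) g w := if_neg hg

theorem Red_actA (v : V) (g : K v) {w : List (L K)} (h : Red Γ w) : Red Γ (actA Γ v g w) := by
  by_cases hg : g = 1
  · simpa [hg] using h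
  · rw [actA_ne_one _ hg]; exact Red_go v _ hg h

theorem SE_actA (v : V) (g : K v) {w w' : List (L K)} (h : SE Γ w w') :
    SE Γ (actA Γ v g w) (actA Γ v g w') := by
  by_cases hg : g = 1
  · simpa [hg] using h
  · rw [actA_ne_one _ hg, actA_ne_one _ hg]; exact go_se v _ g h

theorem prodW_go (v : V) {g : K v} (hg : g ≠ 1) (w : List (L K)) :
    prodW Γ (go Γ v (fun a => g * a) g w) = GraphProduct.of Γ K g * prodW Γ w := by
  induction w with
  | nil => simp
  | cons c w ih =>
      obtain ⟨u, a⟩ := c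
      by_cases h : u = v
      · subst h
        rw [go_cons_head]
        split
        · rename_i hmul
          rw [prodW_cons, ← mul_assoc, ← map_mul]
          dsimp at hmul ⊢
          rw [hmul, map_one, one_mul]
        · rw [prodW_cons, prodW_cons, ← mul_assoc, ← map_mul]
      · by_cases h2 : Γ.Adj u v
        · rw [go_cons_adj _ _ _ h h2, prodW_cons, ih, prodW_cons, ← mul_assoc,
            ← mul_assoc, (of_comm h2 a g).eq]
        · rw [go_cons_barrier _ _ _ h h2]
          simp [mul_assoc]

theorem prodW_actA (v : V) (g : K v) (w : List (L K)) :
    prodW Γ (actA Γ v g w) = GraphProduct.of Γ K g * prodW Γ w := by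
  by_cases hg : g = 1
  · simp [hg]
  · rw [actA_ne_one _ hg, prodW_go v hg]

theorem actA_cons_adj (v : V) (g : K v) {c : L K} (h1 : c.1 ≠ v) (h2 : Γ.Adj c.1 v)
    (w : List (L K)) : actA Γ v g (c :: w) = c :: actA Γ v g w := by
  by_cases hg : g = 1
  · simp [hg]
  · rw [actA_ne_one _ hg, actA_ne_one _ hg, go_cons_adj _ _ _ h1 h2]

theorem go_comp (v : V) {g g' : K v} (hg : g ≠ 1) (hg' : g' ≠ 1) {w : List (L K)}
    (hw : Red Γ w) :
    SE Γ (go Γ v (fun a => g * a) g (go Γ v (fun a => g' * a) g' w))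
      (actA Γ v (g * g') w) := by
  induction w with
  | nil =>
      rw [go_nil, go_cons_head]
      by_cases hgg : g * g' = 1
      · simp only [hgg, if_pos, actA, if_pos rfl]
        exact SE.refl _
      · simp only [hgg, if_neg, actA_ne_one _ hgg, go_nil]
        exact SE.refl _
  | cons c w ih =>
      obtain ⟨hc1, hc2, hc3⟩ := hw
      obtain ⟨u, a⟩ := c
      by_cases h : u = v
      · subst h
        rw [go_cons_head]
        by_cases hga : g' * a = 1
        · rw [if_pos hga]
          by_cases hgg : g * g' = 1
          · rw [hgg, actA_one]
            have hag : a = g := by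
              have : g = g'⁻¹ := eq_inv_of_mul_eq_one_left hgg
              have ha : a = g'⁻¹ := eq_inv_of_mul_eq_one_right hga
              rw [this, ha]
            subst hag
            exact go_of_noHead u _ a hc2
          · rw [actA_ne_one _ hgg, go_cons_head]
            have hval : g * g' * a = g := by rw [mul_assoc, hga, mul_one]
            rw [hval, if_neg hg]
            exact go_of_noHead u _ g hc2
        · rw [if_neg hga, go_cons_head]
          have hval : g * (g' * a) = g * g' * a := (mul_assoc g g' a).symm
          by_cases hgga : g * g' * a = 1
          · rw [hval, if_pos hgga]
            by_cases hgg : g * g' = 1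
            · exact absurd (by rwa [hgg, one_mul] at hgga) hc1
            · rw [actA_ne_one _ hgg, go_cons_head]
              rw [if_pos hgga]
              exact SE.refl _
          · rw [hval, if_neg hgga]
            by_cases hgg : g * g' = 1
            · have : g * g' * a = a := by rw [hgg, one_mul]
              rw [this, hgg, actA_one]
              exact SE.refl _
            · rw [actA_ne_one _ hgg, go_cons_head]
              rw [if_neg hgga]
              exact SE.refl _
      · by_cases h2 : Γ.Adj u v
        · rw [go_cons_adj _ _ _ h h2, go_cons_adj _ _ _ h h2,
            actA_cons_adj _ _ h h2]
          exact (ih hc3).cons _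
        · rw [go_cons_barrier _ _ _ h h2, go_cons_head]
          by_cases hgg : g * g' = 1
          · rw [if_pos hgg, actA, if_pos hgg]
            exact SE.refl _
          · rw [if_neg hgg, actA_ne_one _ hgg, go_cons_barrier _ _ _ h h2]
            exact SE.refl _

theorem actA_mul (v : V) (g g' : K v) {w : List (L K)} (hw : Red Γ w) :
    SE Γ (actA Γ v g (actA Γ v g' w)) (actA Γ v (g * g') w) := by
  by_cases hg : g = 1
  · rw [hg, actA_one, one_mul]
    exact SE.refl _
  · by_cases hg' : g' = 1
    · rw [hg', actA_one, mul_one]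
      exact SE.refl _
    · rw [actA_ne_one _ hg, actA_ne_one _ hg']
      exact go_comp v hg hg' hw

theorem go_comm {u u' : V} (hadj : Γ.Adj u u') {g : K u} {g' : K u'}
    (hg : g ≠ 1) (hg' : g' ≠ 1) (w : List (L K)) :
    SE Γ (go Γ u (fun a => g * a) g (go Γ u' (fun a => g' * a) g' w))
      (go Γ u' (fun a => g' * a) g' (go Γ u (fun a => g * a) g w)) := by
  have hne : u ≠ u' := hadj.ne
  induction w with
  | nil =>
      rw [go_nil (v := u'), go_nil (v := u),
        go_cons_adj u (c := ⟨u', g'⟩) _ _ hne.symm hadj.symm,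
        go_cons_adj u' (c := ⟨u, g⟩) _ _ hne hadj, go_nil, go_nil]
      exact Step.se ⟨[], [], ⟨u', g'⟩, ⟨u, g⟩, hadj.symm, rfl, rfl⟩
  | cons c w ih =>
      obtain ⟨uc, a⟩ := c
      by_cases h : uc = u
      · subst h
        rw [go_cons_adj u' (c := ⟨uc, a⟩) _ _ hne hadj,
          go_cons_head uc _ _ a, go_cons_head uc _ _ a]
        split
        · exact SE.refl _
        · rw [go_cons_adj u' (c := ⟨uc, _⟩) _ _ hne hadj]
          exact SE.refl _
      · by_cases h' : uc = u'
        · subst h'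
          rw [go_cons_adj u (c := ⟨uc, a⟩) _ _ hne.symm hadj.symm,
            go_cons_head uc _ _ a, go_cons_head uc _ _ a]
          split
          · exact SE.refl _
          · rw [go_cons_adj u (c := ⟨uc, _⟩) _ _ hne.symm hadj.symm]
            exact SE.refl _
        · by_cases h2 : Γ.Adj uc u <;> by_cases h2' : Γ.Adj uc u'
          · simp only [go_cons_adj u' (c := ⟨uc, a⟩) _ _ h' h2',
              go_cons_adj u (c := ⟨uc, a⟩) _ _ h h2]
            exact ih.cons _
          · simp only [go_cons_barrier u' (c := ⟨uc, a⟩) _ _ h' h2',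
              go_cons_adj u (c := ⟨u', g'⟩) _ _ hne.symm hadj.symm,
              go_cons_adj u (c := ⟨uc, a⟩) _ _ h h2]
            exact SE.refl _
          · simp only [go_cons_adj u' (c := ⟨uc, a⟩) _ _ h' h2',
              go_cons_barrier u (c := ⟨uc, a⟩) _ _ h h2,
              go_cons_adj u' (c := ⟨u, g⟩) _ _ hne hadj]
            exact SE.refl _
          · simp only [go_cons_barrier u' (c := ⟨uc, a⟩) _ _ h' h2',
              go_cons_adj u (c := ⟨u', g'⟩) _ _ hne.symm hadj.symm,
              go_cons_barrier u (c := ⟨uc, a⟩) _ _ h h2,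
              go_cons_adj u' (c := ⟨u, g⟩) _ _ hne hadj]
            exact Step.se ⟨[], ⟨uc, a⟩ :: w, ⟨u', g'⟩, ⟨u, g⟩, hadj.symm, rfl, rfl⟩

theorem actA_comm {u u' : V} (hadj : Γ.Adj u u') (g : K u) (g' : K u')
    (w : List (L K)) :
    SE Γ (actA Γ u g (actA Γ u' g' w)) (actA Γ u' g' (actA Γ u g w)) := by
  by_cases hg : g = 1
  · rw [hg, actA_one, actA_one]
    exact SE.refl _
  · by_cases hg' : g' = 1
    · rw [hg', actA_one, actA_one]
      exact SE.refl _
    · rw [actA_ne_one _ hg, actA_ne_one _ hg', actA_ne_one _ hg, actA_ne_one _ hg']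
      exact go_comm hadj hg hg' w

variable (Γ) in
/-- setoid of reduced words up to shuffles -/
def RWS (K : V → Type*) [∀ v, Group (K v)] : Setoid {w : List (L K) // Red Γ w} :=
  ⟨fun x y => SE Γ x.1 y.1, fun _ => SE.refl _, SE.symm, SE.trans⟩

variable (Γ) in
/-- reduced words up to shuffles -/
def NW (K : V → Type*) [∀ v, Group (K v)] := Quotient (RWS Γ K)

variable (Γ) in
noncomputable def actN (v : V) (g : K v) : NW Γ K → NW Γ K :=
  Quotient.map (fun x => ⟨actA Γ v g x.1, Red_actA v g x.2⟩) (fun _ _ h => SE_actA v g h)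

theorem actN_one (v : V) : actN Γ v (1 : K v) = id := by
  funext c
  induction c using Quotient.ind
  simp [actN, Quotient.map_mk]
  rfl

theorem actN_mul (v : V) (g g' : K v) (c : NW Γ K) :
    actN Γ v (g * g') c = actN Γ v g (actN Γ v g' c) := by
  induction c using Quotient.ind with | _ x =>
  exact (Quotient.sound (actA_mul v g g' x.2)).symm

noncomputable def permN (v : V) (g : K v) : Equiv.Perm (NW Γ K) where
  toFun := actN Γ v g
  invFun := actN Γ v g⁻¹
  left_inv c := by rw [← actN_mul, inv_mul_cancel, actN_one]; rfl
  right_inv c := by rw [← actN_mul, mul_inv_cancel, actN_one]; rfl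

noncomputable def permHom (v : V) : K v →* Equiv.Perm (NW Γ K) where
  toFun := permN v
  map_one' := by ext c; simp [permN, actN_one]
  map_mul' g g' := by ext c; exact actN_mul v g g' c

variable (Γ K) in
noncomputable def bigHom : Monoid.CoprodI K →* Equiv.Perm (NW Γ K) :=
  Monoid.CoprodI.lift permHom

theorem rels_le_ker : graphProductRels Γ K ≤ (bigHom Γ K).ker := by
  apply Subgroup.normalClosure_le_normal
  rintro x ⟨u, u', a, b, hadj, rfl⟩
  have hcomm : bigHom Γ K (Monoid.CoprodI.of a) * bigHom Γ K (Monoid.CoprodI.of b) =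
      bigHom Γ K (Monoid.CoprodI.of b) * bigHom Γ K (Monoid.CoprodI.of a) := by
    ext c
    induction c using Quotient.ind with | _ x =>
    simp only [bigHom, Monoid.CoprodI.lift_of, Equiv.Perm.mul_apply]
    exact Quotient.sound (actA_comm hadj a b x.1)
  have : bigHom Γ K (Monoid.CoprodI.of a * Monoid.CoprodI.of b *
      (Monoid.CoprodI.of a)⁻¹ * (Monoid.CoprodI.of b)⁻¹) = 1 := by
    simp only [map_mul, map_inv]
    rw [hcomm]
    group
  exact this

variable (Γ K) in
noncomputable def ΦN : GraphProduct Γ K →* Equiv.Perm (NW Γ K) :=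
  QuotientGroup.lift (graphProductRels Γ K) (bigHom Γ K) rels_le_ker

variable (Γ K) in
def evN : NW Γ K → GraphProduct Γ K :=
  Quotient.lift (fun x => prodW Γ x.1) (fun _ _ h => SE.prodW_eq h)

theorem ΦN_of {v : V} (g : K v) (c : NW Γ K) :
    ΦN Γ K (GraphProduct.of Γ K g) c = actN Γ v g c := by
  have h1 : ΦN Γ K (GraphProduct.of Γ K g) = bigHom Γ K (Monoid.CoprodI.of g) :=
    QuotientGroup.lift_mk' (graphProductRels Γ K) rels_le_ker (Monoid.CoprodI.of g)
  rw [h1]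
  simp only [bigHom, Monoid.CoprodI.lift_of]
  rfl

theorem evN_ΦN (x : GraphProduct Γ K) (c : NW Γ K) :
    evN Γ K (ΦN Γ K x c) = x * evN Γ K c := by
  induction x using QuotientGroup.induction_on with | _ z =>
  revert c
  induction z using Monoid.CoprodI.induction_on with
  | one =>
      intro c
      show evN Γ K (ΦN Γ K 1 c) = 1 * evN Γ K c
      rw [map_one, one_mul]
      rfl
  | of i m =>
      intro c
      rw [show (QuotientGroup.mk (Monoid.CoprodI.of m) : GraphProduct Γ K) =
        GraphProduct.of Γ K m from rfl, ΦN_of]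
      induction c using Quotient.ind with | _ x =>
      show prodW Γ (actA Γ i m x.1) = _
      rw [prodW_actA]
      rfl
  | mul y y' ihy ihy' =>
      intro c
      show evN Γ K (ΦN Γ K (QuotientGroup.mk y * QuotientGroup.mk y') c) = _
      erw [map_mul, Equiv.Perm.mul_apply, ihy, ihy']
      erw [show ((QuotientGroup.mk (y * y') : GraphProduct Γ K)) =
        QuotientGroup.mk y * QuotientGroup.mk y' from rfl, mul_assoc]

variable (Γ K) in
def emptyNW : NW Γ K := ⟦⟨[], trivial⟩⟧

theorem ΦN_prodW {w : List (L K)} (hw : Red Γ w) :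
    ΦN Γ K (prodW Γ w) (emptyNW Γ K) = ⟦⟨w, hw⟩⟧ := by
  induction w with
  | nil =>
      rw [prodW_nil, map_one]
      rfl
  | cons c w ih =>
      obtain ⟨hc1, hc2, hc3⟩ := hw
      rw [prodW_cons, map_mul, Equiv.Perm.mul_apply, ih hc3]
      erw [ΦN_of]
      show Quotient.map _ _ _ = _
      erw [Quotient.map_mk]
      apply Quotient.sound
      show SE Γ (actA Γ c.1 c.2 w) (c :: w)
      rw [actA_ne_one _ hc1]
      exact go_of_noHead c.1 _ c.2 hc2

variable (Γ K) in
noncomputable def eN : NW Γ K ≃ GraphProduct Γ K where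
  toFun := evN Γ K
  invFun x := ΦN Γ K x (emptyNW Γ K)
  left_inv c := by
    induction c using Quotient.ind with | _ x =>
    exact ΦN_prodW x.2
  right_inv x := by
    rw [evN_ΦN]
    show x * prodW Γ [] = x
    rw [prodW_nil, mul_one]

theorem reach_reverse {u : V} {w : List (L K)} : reach Γ u w.reverse ↔ reach Γ u w := by
  simp [reach]

theorem red_snoc {w : List (L K)} {c : L K} :
    Red Γ (w ++ [c]) ↔ Red Γ w ∧ c.2 ≠ 1 ∧ noHead Γ c.1 w.reverse := by
  induction w with
  | nil => simp
  | cons d w ih =>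
      rw [List.cons_append, Red_cons, noHead_append, ih, Red_cons,
        List.reverse_cons, noHead_append]
      have h1 : noHead Γ d.1 [c] ↔ c.1 ≠ d.1 := by simp
      have h2 : noHead Γ c.1 [d] ↔ d.1 ≠ c.1 := by simp
      rw [h1, h2, reach_reverse]
      by_cases hcd : c.1 = d.1
      · have h3 : (reach Γ d.1 w → c.1 ≠ d.1) ↔ ¬ reach Γ d.1 w := by simp [hcd]
        have h4 : (reach Γ c.1 w → d.1 ≠ c.1) ↔ ¬ reach Γ c.1 w := by simp [hcd]
        have h5 : reach Γ c.1 w ↔ reach Γ d.1 w := by rw [hcd]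
        rw [h3, h4, h5]
        tauto
      · have : c.1 ≠ d.1 := hcd
        have : d.1 ≠ c.1 := fun hh => hcd hh.symm
        tauto

theorem Red_reverse {w : List (L K)} : Red Γ w.reverse ↔ Red Γ w := by
  induction w with
  | nil => simp
  | cons c w ih =>
      rw [List.reverse_cons, red_snoc, List.reverse_reverse, Red_cons, ih]
      tauto

theorem Step.reverse {w w' : List (L K)} (h : Step Γ w w') :
    Step Γ w.reverse w'.reverse := by
  obtain ⟨p, q, a, b, hab, rfl, rfl⟩ := h
  refine ⟨q.reverse, p.reverse, b, a, hab.symm, ?_, ?_⟩ <;> simp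

theorem SE.reverse {w w' : List (L K)} (h : SE Γ w w') : SE Γ w.reverse w'.reverse := by
  induction h with
  | refl => exact SE.refl _
  | tail h₁ h₂ ih => exact ih.trans h₂.reverse.se

variable (Γ) in
/-- right multiplication by `s ∈ K v` on words -/
noncomputable def actR (v : V) (s : K v) (w : List (L K)) : List (L K) :=
  (go Γ v (fun a => a * s) s w.reverse).reverse

theorem Red_actR (v : V) {s : K v} (hs : s ≠ 1) {w : List (L K)} (hw : Red Γ w) :
    Red Γ (actR Γ v s w) := by
  rw [actR, Red_reverse]
  exact Red_go v _ hs (Red_reverse.2 hw)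

theorem prodW_rev_go (v : V) (s : K v) (u : List (L K)) :
    prodW Γ (go Γ v (fun a => a * s) s u).reverse
      = prodW Γ u.reverse * GraphProduct.of Γ K s := by
  induction u with
  | nil => simp
  | cons c u ih =>
      obtain ⟨uc, a⟩ := c
      by_cases h : uc = v
      · subst h
        rw [go_cons_head]
        split
        · rename_i hmul
          simp only [List.reverse_cons, prodW_append, prodW_cons, prodW_nil, mul_one]
          rw [mul_assoc, ← map_mul, hmul, map_one, mul_one]
        · simp only [List.reverse_cons, prodW_append, prodW_cons, prodW_nil, mul_one]
          rw [mul_assoc, ← map_mul]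
      · by_cases h2 : Γ.Adj uc v
        · rw [go_cons_adj _ _ _ h h2]
          simp only [List.reverse_cons, prodW_append, prodW_cons, prodW_nil, mul_one]
          rw [ih, mul_assoc, mul_assoc, (of_comm h2 a s).eq]
        · rw [go_cons_barrier _ _ _ h h2]
          simp only [List.reverse_cons, prodW_append, prodW_cons, prodW_nil, mul_one]

theorem prodW_actR (v : V) (s : K v) (w : List (L K)) :
    prodW Γ (actR Γ v s w) = prodW Γ w * GraphProduct.of Γ K s := by
  rw [actR, prodW_rev_go, List.reverse_reverse]

theorem eN_apply (c : NW Γ K) : eN Γ K c = evN Γ K c := rfl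

section Transfer

variable {K' : V → Type*} [∀ v, Group (K' v)] (m : ∀ v, K v → K' v)

/-- letterwise transfer -/
def mapL : L K → L K' := fun c => ⟨c.1, m c.1 c.2⟩

/-- wordwise transfer -/
def mapW : List (L K) → List (L K') := List.map (mapL m)

@[simp] theorem mapW_nil : mapW m ([] : List (L K)) = [] := rfl

@[simp] theorem mapW_cons (c : L K) (w : List (L K)) :
    mapW m (c :: w) = ⟨c.1, m c.1 c.2⟩ :: mapW m w := rfl

theorem mapW_reverse (w : List (L K)) : mapW m w.reverse = (mapW m w).reverse := by
  simp [mapW]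

theorem noHead_mapW {u : V} {w : List (L K)} (h : noHead Γ u w) :
    noHead Γ u (mapW m w) := by
  induction w with
  | nil => trivial
  | cons c w ih => exact ⟨h.1, fun ha => ih (h.2 ha)⟩

theorem Red_mapW (hne : ∀ v (a : K v), a ≠ 1 → m v a ≠ 1) {w : List (L K)}
    (h : Red Γ w) : Red Γ (mapW m w) := by
  induction w with
  | nil => trivial
  | cons c w ih =>
      exact ⟨hne c.1 c.2 h.1, noHead_mapW m h.2.1, ih h.2.2⟩

theorem Step_mapW {w w' : List (L K)} (h : Step Γ w w') :
    Step Γ (mapW m w) (mapW m w') := by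
  obtain ⟨p, q, a, b, hab, rfl, rfl⟩ := h
  exact ⟨mapW m p, mapW m q, mapL m a, mapL m b, hab, by simp [mapW, mapL], by simp [mapW, mapL]⟩

theorem SE_mapW {w w' : List (L K)} (h : SE Γ w w') : SE Γ (mapW m w) (mapW m w') := by
  induction h with
  | refl => exact SE.refl _
  | tail h₁ h₂ ih => exact ih.trans (Step_mapW m h₂).se

variable (Γ) in
noncomputable def mapN (hne : ∀ v (a : K v), a ≠ 1 → m v a ≠ 1) : NW Γ K → NW Γ K' :=
  Quotient.map (fun y => ⟨mapW m y.1, Red_mapW m hne y.2⟩) (fun _ _ h => SE_mapW m h)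

variable (Γ) in
/-- the transfer map between graph products induced by letterwise maps -/
noncomputable def transfer (hne : ∀ v (a : K v), a ≠ 1 → m v a ≠ 1) :
    GraphProduct Γ K → GraphProduct Γ K' :=
  fun x => evN Γ K' (mapN Γ m hne ((eN Γ K).symm x))

theorem mapgo (hm1 : ∀ v, m v 1 = 1) {v : V} (s : K v) {Tv : Set (K' v)}
    (ht : ∀ a : K v, (m v a)⁻¹ * m v (a * s) ∈ Tv) (u : List (L K)) :
    ∃ t ∈ Tv, prodW Γ (mapW m (go Γ v (fun a => a * s) s u)).reverse
      = prodW Γ (mapW m u).reverse * GraphProduct.of Γ K' t := by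
  induction u with
  | nil =>
      refine ⟨(m v 1)⁻¹ * m v (1 * s), ht 1, ?_⟩
      rw [hm1, one_mul, inv_one, one_mul]
      simp
  | cons c u ih =>
      obtain ⟨uc, a⟩ := c
      by_cases h : uc = v
      · subst h
        rw [go_cons_head]
        refine ⟨(m uc a)⁻¹ * m uc (a * s), ht a, ?_⟩
        split
        · rename_i hmul
          simp only [mapW_cons, List.reverse_cons, prodW_append, prodW_cons,
            prodW_nil, mul_one]
          rw [mul_assoc, ← map_mul, mul_inv_cancel_left, hmul, hm1, map_one, mul_one]
        · simp only [mapW_cons, List.reverse_cons, prodW_append, prodW_cons,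
            prodW_nil, mul_one]
          rw [mul_assoc, ← map_mul, mul_inv_cancel_left]
      · by_cases h2 : Γ.Adj uc v
        · rw [go_cons_adj _ _ _ h h2]
          obtain ⟨t, htT, ih⟩ := ih
          refine ⟨t, htT, ?_⟩
          simp only [mapW_cons, List.reverse_cons, prodW_append, prodW_cons,
            prodW_nil, mul_one]
          rw [ih, mul_assoc, mul_assoc, (of_comm h2 (m uc a) t).eq]
        · rw [go_cons_barrier _ _ _ h h2]
          refine ⟨(m v 1)⁻¹ * m v (1 * s), ht 1, ?_⟩
          rw [hm1, one_mul, inv_one, one_mul]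
          simp only [mapW_cons, List.reverse_cons, prodW_append, prodW_cons,
            prodW_nil, mul_one]

theorem transfer_mul_of (hne : ∀ v (a : K v), a ≠ 1 → m v a ≠ 1)
    (hm1 : ∀ v, m v 1 = 1) {v : V} {s : K v} (hs : s ≠ 1) {Tv : Set (K' v)}
    (ht : ∀ a : K v, (m v a)⁻¹ * m v (a * s) ∈ Tv) (x : GraphProduct Γ K) :
    ∃ t ∈ Tv, transfer Γ m hne (x * GraphProduct.of Γ K s)
      = transfer Γ m hne x * GraphProduct.of Γ K' t := by
  obtain ⟨⟨w, hred⟩, hc⟩ := Quotient.exists_rep ((eN Γ K).symm x)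
  have hx : prodW Γ w = x := by
    have := congrArg (eN Γ K) hc
    rwa [Equiv.apply_symm_apply] at this
  have hred' : Red Γ (actR Γ v s w) := Red_actR v hs hred
  have hev' : evN Γ K (⟦⟨actR Γ v s w, hred'⟩⟧ : NW Γ K) = x * GraphProduct.of Γ K s := by
    show prodW Γ (actR Γ v s w) = _
    rw [prodW_actR, hx]
  have hsymm' : (eN Γ K).symm (x * GraphProduct.of Γ K s)
      = (⟦⟨actR Γ v s w, hred'⟩⟧ : NW Γ K) := by
    rw [← hev']
    erw [← eN_apply]
    exact (eN Γ K).symm_apply_apply _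
  obtain ⟨t, htT, hkey⟩ := mapgo m hm1 s ht w.reverse
  refine ⟨t, htT, ?_⟩
  rw [transfer, hsymm', transfer, ← hc]
  show prodW Γ (mapW m (actR Γ v s w)) = prodW Γ (mapW m w) * GraphProduct.of Γ K' t
  rw [actR, mapW_reverse, hkey, mapW_reverse, List.reverse_reverse]

theorem transfer_comp (hne : ∀ v (a : K v), a ≠ 1 → m v a ≠ 1)
    (m' : ∀ v, K' v → K v) (hne' : ∀ v (a : K' v), a ≠ 1 → m' v a ≠ 1)
    (hinv : ∀ v a, m' v (m v a) = a) (x : GraphProduct Γ K) :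
    transfer Γ m' hne' (transfer Γ m hne x) = x := by
  rw [transfer, transfer]
  have h1 : (eN Γ K').symm (evN Γ K' (mapN Γ m hne ((eN Γ K).symm x)))
      = mapN Γ m hne ((eN Γ K).symm x) := (eN Γ K').symm_apply_apply _
  rw [h1]
  have h2 : mapN Γ m' hne' (mapN Γ m hne ((eN Γ K).symm x)) = (eN Γ K).symm x := by
    induction ((eN Γ K).symm x) using Quotient.ind with | _ y =>
    show Quotient.map _ _ (Quotient.map _ _ _) = _
    erw [Quotient.map_mk]
    congr 1
    refine Subtype.ext ?_
    show mapW m' (mapW m y.1) = y.1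
    rw [mapW, mapW, List.map_map]
    have : mapL m' ∘ mapL m = id := by
      funext c
      simp [mapL, hinv]
    rw [this, List.map_id]
  rw [h2]
  exact (eN Γ K).apply_symm_apply x

end Transfer

theorem of_ne_one {v : V} {s : K v} (hs : s ≠ 1) : GraphProduct.of Γ K s ≠ 1 := by
  intro h
  have hred : Red Γ [⟨v, s⟩] := ⟨hs, trivial, trivial⟩
  have h3 : eN Γ K (⟦⟨[⟨v, s⟩], hred⟩⟧ : NW Γ K) = eN Γ K (emptyNW Γ K) := by
    erw [eN_apply, eN_apply]
    show prodW Γ [⟨v, s⟩] = prodW Γ []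
    simpa using h
  have := (eN Γ K).injective h3
  have hse : SE Γ [⟨v, s⟩] ([] : List (L K)) := Quotient.exact this
  simpa using hse.length

theorem cayley_adj {A : Type*} [Group A] {S : Set A} {x y : A} :
    (cayley A S).Adj x y ↔ x ≠ y ∧ (x⁻¹ * y ∈ S ∨ y⁻¹ * x ∈ S) :=
  SimpleGraph.fromRel_adj _ _ _

end GPAux

open GPAux in
/-- Main theorem: if the vertex groups have isomorphic Cayley graphs (w.r.t. symmetric
generating sets not containing the identity), then the graph products have isomorphic
Cayley graphs with respect to the unions of the vertex generating sets. -/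
theorem stmt_10 {V : Type*} (Γ : SimpleGraph V) (G H : V → Type*)
    [∀ v, Group (G v)] [∀ v, Group (H v)]
    (S : ∀ v, Set (G v)) (T : ∀ v, Set (H v))
    (hSsymm : ∀ v, ∀ s ∈ S v, s⁻¹ ∈ S v) (hS1 : ∀ v, (1 : G v) ∉ S v)
    (hSgen : ∀ v, Subgroup.closure (S v) = ⊤)
    (hTsymm : ∀ v, ∀ t ∈ T v, t⁻¹ ∈ T v) (hT1 : ∀ v, (1 : H v) ∉ T v)
    (hTgen : ∀ v, Subgroup.closure (T v) = ⊤)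
    (f : ∀ v, cayley (G v) (S v) ≃g cayley (H v) (T v)) :
    Nonempty (cayley (GraphProduct Γ G) (⋃ v, (fun s => GraphProduct.of Γ G s) '' S v)
      ≃g cayley (GraphProduct Γ H) (⋃ v, (fun t => GraphProduct.of Γ H t) '' T v)) := by
  classical
  set m : ∀ v, G v → H v := fun v a => ((f v) 1)⁻¹ * (f v) a with hm_def
  set m' : ∀ v, H v → G v := fun v b => (f v).symm ((f v) 1 * b) with hm'_def
  have hm1 : ∀ v, m v 1 = 1 := fun v => by simp [hm_def]
  have hm'1 : ∀ v, m' v 1 = 1 := fun v => by simp [hm'_def]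
  have hminv : ∀ v a, m' v (m v a) = a := fun v a => by
    simp [hm_def, hm'_def]
  have hm'inv : ∀ v b, m v (m' v b) = b := fun v b => by
    simp [hm_def, hm'_def]
  have hne : ∀ v (a : G v), a ≠ 1 → m v a ≠ 1 := by
    intro v a ha hma
    exact ha (by rw [← hminv v a, hma, hm'1])
  have hne' : ∀ v (b : H v), b ≠ 1 → m' v b ≠ 1 := by
    intro v b hb hmb
    exact hb (by rw [← hm'inv v b, hmb, hm1])
  have hedge : ∀ (v : V) (s : G v), s ∈ S v → ∀ a : G v, (m v a)⁻¹ * m v (a * s) ∈ T v := by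
    intro v s hs a
    have hs1 : s ≠ 1 := fun h => hS1 v (h ▸ hs)
    have hadj : (cayley (G v) (S v)).Adj a (a * s) := by
      rw [cayley_adj]
      exact ⟨fun h => hs1 (left_eq_mul.mp h),
        Or.inl (by rw [inv_mul_cancel_left]; exact hs)⟩
    have hadj2 : (cayley (H v) (T v)).Adj ((f v) a) ((f v) (a * s)) :=
      (f v).map_adj_iff.mpr hadj
    rw [cayley_adj] at hadj2
    have hval : (m v a)⁻¹ * m v (a * s) = ((f v) a)⁻¹ * (f v) (a * s) := by
      simp [hm_def, mul_inv_rev, mul_assoc]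
    rw [hval]
    obtain ⟨_, h | h⟩ := hadj2
    · exact h
    · simpa [mul_inv_rev] using hTsymm v _ h
  have hedge' : ∀ (v : V) (t : H v), t ∈ T v → ∀ b : H v,
      (m' v b)⁻¹ * m' v (b * t) ∈ S v := by
    intro v t ht b
    have ht1 : t ≠ 1 := fun h => hT1 v (h ▸ ht)
    have hadj : (cayley (H v) (T v)).Adj ((f v) 1 * b) ((f v) 1 * (b * t)) := by
      rw [cayley_adj]
      constructor
      · intro h
        exact ht1 (left_eq_mul.mp (mul_left_cancel h))
      · left
        rw [mul_inv_rev, mul_assoc, inv_mul_cancel_left, inv_mul_cancel_left]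
        exact ht
    have hadj2 : (cayley (G v) (S v)).Adj ((f v).symm ((f v) 1 * b))
        ((f v).symm ((f v) 1 * (b * t))) := (f v).symm.map_adj_iff.mpr hadj
    rw [cayley_adj] at hadj2
    obtain ⟨_, h | h⟩ := hadj2
    · exact h
    · simpa [mul_inv_rev] using hSsymm v _ h
  let E : GraphProduct Γ G ≃ GraphProduct Γ H :=
    { toFun := transfer Γ m hne
      invFun := transfer Γ m' hne'
      left_inv := transfer_comp m hne m' hne' hminv
      right_inv := transfer_comp m' hne' m hne hm'inv }
  have keyG : ∀ (x : GraphProduct Γ G) (v : V) (s : G v), s ∈ S v →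
      ∃ t ∈ T v, transfer Γ m hne (x * GraphProduct.of Γ G s)
        = transfer Γ m hne x * GraphProduct.of Γ H t := by
    intro x v s hs
    exact transfer_mul_of m hne hm1 (fun h => hS1 v (h ▸ hs)) (hedge v s hs) x
  have keyH : ∀ (y : GraphProduct Γ H) (v : V) (t : H v), t ∈ T v →
      ∃ s ∈ S v, transfer Γ m' hne' (y * GraphProduct.of Γ H t)
        = transfer Γ m' hne' y * GraphProduct.of Γ G s := by
    intro y v t ht
    exact transfer_mul_of m' hne' hm'1 (fun h => hT1 v (h ▸ ht)) (hedge' v t ht) y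
  have AD : ∀ x y : GraphProduct Γ G,
      (cayley (GraphProduct Γ G) (⋃ v, (fun s => GraphProduct.of Γ G s) '' S v)).Adj x y →
      (cayley (GraphProduct Γ H) (⋃ v, (fun t => GraphProduct.of Γ H t) '' T v)).Adj
        (E x) (E y) := by
    intro x y hxy
    rw [cayley_adj] at hxy ⊢
    obtain ⟨hne0, h | h⟩ := hxy
    · obtain ⟨U, ⟨v, rfl⟩, hU⟩ := h
      obtain ⟨s, hs, heq⟩ := hU
      replace heq : GraphProduct.of Γ G s = x⁻¹ * y := heq
      have hy : y = x * GraphProduct.of Γ G s := by rw [heq, mul_inv_cancel_left]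
      obtain ⟨t, htT, htr⟩ := keyG x v s hs
      refine ⟨E.injective.ne hne0, Or.inl ?_⟩
      have : (E x)⁻¹ * E y = GraphProduct.of Γ H t := by
        show (transfer Γ m hne x)⁻¹ * transfer Γ m hne y = _
        rw [hy, htr, inv_mul_cancel_left]
      rw [this]
      exact Set.mem_iUnion.mpr ⟨v, Set.mem_image_of_mem _ htT⟩
    · obtain ⟨U, ⟨v, rfl⟩, hU⟩ := h
      obtain ⟨s, hs, heq⟩ := hU
      replace heq : GraphProduct.of Γ G s = y⁻¹ * x := heq
      have hx : x = y * GraphProduct.of Γ G s := by rw [heq, mul_inv_cancel_left]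
      obtain ⟨t, htT, htr⟩ := keyG y v s hs
      refine ⟨E.injective.ne hne0, Or.inr ?_⟩
      have : (E y)⁻¹ * E x = GraphProduct.of Γ H t := by
        show (transfer Γ m hne y)⁻¹ * transfer Γ m hne x = _
        rw [hx, htr, inv_mul_cancel_left]
      rw [this]
      exact Set.mem_iUnion.mpr ⟨v, Set.mem_image_of_mem _ htT⟩
  have AD' : ∀ x y : GraphProduct Γ H,
      (cayley (GraphProduct Γ H) (⋃ v, (fun t => GraphProduct.of Γ H t) '' T v)).Adj x y →
      (cayley (GraphProduct Γ G) (⋃ v, (fun s => GraphProduct.of Γ G s) '' S v)).Adj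
        (E.symm x) (E.symm y) := by
    intro x y hxy
    rw [cayley_adj] at hxy ⊢
    obtain ⟨hne0, h | h⟩ := hxy
    · obtain ⟨U, ⟨v, rfl⟩, hU⟩ := h
      obtain ⟨t, ht, heq⟩ := hU
      replace heq : GraphProduct.of Γ H t = x⁻¹ * y := heq
      have hy : y = x * GraphProduct.of Γ H t := by rw [heq, mul_inv_cancel_left]
      obtain ⟨s, hsS, htr⟩ := keyH x v t ht
      refine ⟨E.symm.injective.ne hne0, Or.inl ?_⟩
      have : (E.symm x)⁻¹ * E.symm y = GraphProduct.of Γ G s := by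
        show (transfer Γ m' hne' x)⁻¹ * transfer Γ m' hne' y = _
        rw [hy, htr, inv_mul_cancel_left]
      rw [this]
      exact Set.mem_iUnion.mpr ⟨v, Set.mem_image_of_mem _ hsS⟩
    · obtain ⟨U, ⟨v, rfl⟩, hU⟩ := h
      obtain ⟨t, ht, heq⟩ := hU
      replace heq : GraphProduct.of Γ H t = y⁻¹ * x := heq
      have hx : x = y * GraphProduct.of Γ H t := by rw [heq, mul_inv_cancel_left]
      obtain ⟨s, hsS, htr⟩ := keyH y v t ht
      refine ⟨E.symm.injective.ne hne0, Or.inr ?_⟩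
      have : (E.symm y)⁻¹ * E.symm x = GraphProduct.of Γ G s := by
        show (transfer Γ m' hne' y)⁻¹ * transfer Γ m' hne' x = _
        rw [hx, htr, inv_mul_cancel_left]
      rw [this]
      exact Set.mem_iUnion.mpr ⟨v, Set.mem_image_of_mem _ hsS⟩
  refine ⟨⟨E, ?_⟩⟩
  intro x y
  constructor
  · intro h
    have := AD' _ _ h
    simpa using this
  · exact AD x y
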